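/- Let |·| be a nontrivial discrete q-absolute value function on a field k, V a vector space over k, and A ⊆ V a balanced absorbing set. Then for every v ∈ V with N_A(v) > 0 the infimum defining the Minkowski functional N_A(v) = inf{|t| : v ∈ tA} is attained, and A equals the closed unit ball {v ∈ V : N_A(v) ≤ 1}. -/
import Mathlib


open Pointwise

/-- For a nontrivial discrete q-absolute value function on k and a balanced
absorbing set A ⊆ V, the infimum defining N_A(v) is attained whenever N_A(v) > 0, and
A equals the closed unit ball of N_A. -/
theorem stmt_12 {k V : Type*} [Field k] [AddCommGroup V] [Module k V]
    (q : ℝ) (hq : 0 < q) (f : k → ℝ)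
    (hnn : ∀ x, 0 ≤ f x)
    (h0 : ∀ x, f x = 0 ↔ x = 0)
    (hmul : ∀ x y, f (x * y) = f x * f y)
    (haddq : ∀ x y, f (x + y) ^ q ≤ f x ^ q + f y ^ q)
    (ρ : ℝ) (hρ : ρ < 1) (hdisc : ∀ x : k, f x < 1 → f x ≤ ρ)
    (hnt : ∃ x : k, 0 < f x ∧ f x < 1)
    (A : Set V)
    (hbal : ∀ t : k, f t ≤ 1 → t • A ⊆ A)
    (habs : ∀ v : V, ∃ t₀ : k, t₀ ≠ 0 ∧ ∀ t : k, f t ≤ f t₀ → t • v ∈ A)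
    (N : V → ℝ)
    (hN : ∀ v : V, N v = sInf {c : ℝ | ∃ t : k, c = f t ∧ v ∈ t • A}) :
    (∀ v : V, 0 < N v → ∃ t : k, v ∈ t • A ∧ f t = N v) ∧
    A = {v : V | N v ≤ 1} := by
  classical
  obtain ⟨x₀, hx₀pos, hx₀lt⟩ := hnt
  have hρpos : 0 < ρ := lt_of_lt_of_le hx₀pos (hdisc x₀ hx₀lt)
  have hfpos : ∀ t : k, t ≠ 0 → 0 < f t := fun t ht =>
    lt_of_le_of_ne (hnn t) (fun h => ht ((h0 t).mp h.symm))
  have hf1 : f 1 = 1 := by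
    have h := hmul 1 1
    rw [mul_one] at h
    have h1 : 0 < f 1 := hfpos 1 one_ne_zero
    nlinarith
  have hfinv : ∀ t : k, t ≠ 0 → f t⁻¹ = (f t)⁻¹ := by
    intro t ht
    have h : f t⁻¹ * f t = 1 := by
      rw [← hmul, inv_mul_cancel₀ ht, hf1]
    exact eq_inv_of_mul_eq_one_left h
  have hSne : ∀ v : V, Set.Nonempty {c : ℝ | ∃ t : k, c = f t ∧ v ∈ t • A} := by
    intro v
    obtain ⟨t₀, ht₀, ht⟩ := habs v
    exact ⟨f t₀⁻¹, t₀⁻¹, rfl,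
      ⟨t₀ • v, ht t₀ le_rfl, by show t₀⁻¹ • t₀ • v = v; rw [smul_smul, inv_mul_cancel₀ ht₀, one_smul]⟩⟩
  have hSbdd : ∀ v : V, BddBelow {c : ℝ | ∃ t : k, c = f t ∧ v ∈ t • A} :=
    fun v => ⟨0, fun c ⟨t, hc, _⟩ => hc ▸ hnn t⟩
  have hattain : ∀ v : V, 0 < N v → ∃ t : k, v ∈ t • A ∧ f t = N v := by
    intro v hv
    rw [hN v] at hv ⊢
    set S := {c : ℝ | ∃ t : k, c = f t ∧ v ∈ t • A} with hS
    have hlt : sInf S < sInf S / ρ := by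
      rw [lt_div_iff₀ hρpos]
      nlinarith
    obtain ⟨c, hcS, hclt⟩ := exists_lt_of_csInf_lt (hSne v) hlt
    obtain ⟨t, rfl, htA⟩ := hcS
    refine ⟨t, htA, le_antisymm ?_ (csInf_le (hSbdd v) ⟨t, rfl, htA⟩)⟩
    by_contra hgt
    push_neg at hgt
    obtain ⟨c', hc'S, hc'lt⟩ := exists_lt_of_csInf_lt (hSne v) hgt
    obtain ⟨s, rfl, hsA⟩ := hc'S
    have htpos : 0 < f t := lt_trans hv hgt
    have htne : t ≠ 0 := by
      intro h
      rw [h, (h0 0).mpr rfl] at htpos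
      exact lt_irrefl 0 htpos
    have hrat : f (s * t⁻¹) < 1 := by
      rw [hmul, hfinv t htne, ← div_eq_mul_inv, div_lt_one htpos]
      exact hc'lt
    have hd : f s / f t ≤ ρ := by
      have := hdisc _ hrat
      rwa [hmul, hfinv t htne, ← div_eq_mul_inv] at this
    have hfs : f s ≤ ρ * f t := by
      rw [div_le_iff₀ htpos] at hd
      linarith
    have hlt2 : f s < sInf S := by nlinarith [(lt_div_iff₀ hρpos).mp hclt]
    exact absurd (csInf_le (hSbdd v) ⟨s, rfl, hsA⟩) (not_le.mpr hlt2)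
  refine ⟨hattain, ?_⟩
  ext v
  simp only [Set.mem_setOf_eq]
  constructor
  · intro hvA
    rw [hN v]
    exact csInf_le (hSbdd v) ⟨1, hf1.symm, ⟨v, hvA, one_smul k v⟩⟩
  · intro hv
    rcases lt_or_eq_of_le hv with hlt | heq
    · rw [hN v] at hlt
      obtain ⟨c, hcS, hc1⟩ := exists_lt_of_csInf_lt (hSne v) hlt
      obtain ⟨t, rfl, htA⟩ := hcS
      exact hbal t (le_of_lt hc1) htA
    · obtain ⟨t, htA, hft⟩ := hattain v (by rw [heq]; exact one_pos)
      exact hbal t (by rw [hft, heq]) htA
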